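/- For real x ≠ 0 and all n ≥ 2, the convolution identity O_n'(x) + (n/x)·O_n(x) = ∑_{j=1}^{n−1} O_j(x)·O_{n−j}(x) holds. -/

import Mathlib

noncomputable def oresme : ℕ → ℝ → ℝ
  | 0 => fun _ => 0
  | 1 => fun x => 1/x
  | (n+2) => fun x => oresme (n+1) x - (1/x^2) * oresme n x

/-!
Write `t = 1/x`. Both `E n = O_n' + n t O_n` and the convolution `C n = ∑ O_j O_{n-j}` vanish
for `n = 0, 1` and satisfy the same inhomogeneous recurrence
`X (n+2) = X (n+1) - t² X n + t O_{n+1}`: for `C` by splitting off the term `j = n+1` and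
applying the recurrence of `O` to the second factor, for `E` by differentiating the recurrence of
`O`, the `2t³ O_n` coming from `(t²)' ` cancelling against the shift `n ↦ n+2` in the weight.
-/

open Finset

noncomputable def oresmeConv (n : ℕ) (x : ℝ) : ℝ :=
  ∑ j ∈ Icc 1 (n-1), oresme j x * oresme (n-j) x

theorem oresme_add_two (n : ℕ) (x : ℝ) :
    oresme (n+2) x = oresme (n+1) x - (1/x^2) * oresme n x := rfl

theorem differentiableAt_oresme {x : ℝ} (hx : x ≠ 0) (n : ℕ) :
    DifferentiableAt ℝ (oresme n) x := by
  induction n using Nat.twoStepInduction with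
  | zero => exact differentiableAt_const _
  | one =>
    show DifferentiableAt ℝ (fun y : ℝ => 1/y) x
    fun_prop (disch := exact hx)
  | more n ih₀ ih₁ =>
    show DifferentiableAt ℝ (fun y => oresme (n+1) y - 1/y^2 * oresme n y) x
    fun_prop (disch := exact pow_ne_zero 2 hx)

theorem deriv_oresme_one (x : ℝ) : deriv (oresme 1) x = -(1/x^2) := by
  show deriv (fun y : ℝ => 1/y) x = _
  simp

theorem deriv_oresme_add_two {x : ℝ} (hx : x ≠ 0) (n : ℕ) :
    deriv (oresme (n+2)) x =
      deriv (oresme (n+1)) x + 2/x^3 * oresme n x - 1/x^2 * deriv (oresme n) x := by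
  have hsq : HasDerivAt (fun y : ℝ => 1/y^2) (-2/x^3) x :=
    ((hasDerivAt_const x 1).div (hasDerivAt_pow 2 x) (pow_ne_zero 2 hx)).congr_deriv
      (by field_simp; ring)
  have hO := fun k => (differentiableAt_oresme hx k).hasDerivAt
  have hrec := (hO (n+1)).sub (hsq.mul (hO n))
  rw [show oresme (n+2) = oresme (n+1) - (fun y : ℝ => 1/y^2) * oresme n from rfl, hrec.deriv]
  ring

theorem deriv_add_mul_oresme_add_two {x : ℝ} (hx : x ≠ 0) (n : ℕ) :
    deriv (oresme (n+2)) x + ((n+2:ℕ)/x) * oresme (n+2) x =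
      (deriv (oresme (n+1)) x + ((n+1:ℕ)/x) * oresme (n+1) x)
        - 1/x^2 * (deriv (oresme n) x + (n/x) * oresme n x) + 1/x * oresme (n+1) x := by
  rw [deriv_oresme_add_two hx, oresme_add_two]
  push_cast
  field_simp
  ring

theorem oresmeConv_add_two (n : ℕ) (x : ℝ) :
    oresmeConv (n+2) x = oresmeConv (n+1) x - 1/x^2 * oresmeConv n x + 1/x * oresme (n+1) x := by
  have hlow : ∑ j ∈ Icc 1 n, oresme j x * oresme (n-j) x = oresmeConv n x := by
    rcases n with _ | n
    · rfl
    · rw [sum_Icc_succ_top (by omega), Nat.sub_self, oresmeConv, Nat.add_sub_cancel]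
      simp [oresme]
  have hstep : ∀ j ∈ Icc 1 n, oresme j x * oresme (n+2-j) x =
      oresme j x * oresme (n+1-j) x - 1/x^2 * (oresme j x * oresme (n-j) x) := by
    intro j hj
    rw [show n+2-j = (n-j)+2 by grind, show n+1-j = (n-j)+1 by grind, oresme_add_two]
    ring
  rw [← hlow]
  simp only [oresmeConv]
  rw [show n+2-1 = n+1 by omega, Nat.add_sub_cancel, sum_Icc_succ_top (by omega),
    sum_congr rfl hstep, sum_sub_distrib, ← mul_sum, show n+2-(n+1) = 1 by omega]
  simp only [oresme]
  ring

theorem oresme_deriv_convolution_general (x : ℝ) (hx : x ≠ 0) (n : ℕ) :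
    deriv (oresme n) x + (n/x) * oresme n x =
      ∑ j ∈ Finset.Icc 1 (n-1), oresme j x * oresme (n-j) x := by
  change _ = oresmeConv n x
  induction n using Nat.twoStepInduction with
  | zero => simp [oresmeConv, oresme]
  | one =>
    rw [deriv_oresme_one, oresmeConv, Nat.sub_self, Icc_eq_empty (by omega), sum_empty,
      Nat.cast_one]
    show -(1/x^2) + 1/x * (1/x) = 0
    ring
  | more n ih₀ ih₁ =>
    rw [deriv_add_mul_oresme_add_two hx, ih₀, ih₁, oresmeConv_add_two]

theorem oresme_deriv_convolution (x : ℝ) (hx : x ≠ 0) (n : ℕ) (hn : 2 ≤ n) :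
    deriv (oresme n) x + (n/x) * oresme n x =
      ∑ j ∈ Finset.Icc 1 (n-1), oresme j x * oresme (n-j) x :=
  oresme_deriv_convolution_general x hx n
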